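/- In the symmetric group S_{n+1}, the number of boolean elements with support exactly {α_i, α_{i+1}, ..., α_{j}} (a set of consecutive simple roots with j ≥ i) is 2^{j-i}, i.e., the number of boolean elements of S_{n+1} whose support is a fixed interval of size k is 2^{k-1}. -/

import Mathlib

/-!
Represent `W` on `ℕ` by `s_k ↦ (k k+1)`. For a permutation `σ`, the number of points `q ≤ k`
with `σ q > k` is subadditive in `σ` and at most `1` on an adjacent transposition, with equality
only for `(k k+1)`; so for any word of `w` it bounds the number of occurrences of `s_k` from below,
and for a word with distinct letters it equals that number. Summing over `k` shows that words with
distinct letters are reduced and that every reduced word of such an element uses the same letters: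
the support of a boolean element is the set of letters of any of its words.

Now `s_{b+1}` commutes with every `s_l`, `l < b`, so a boolean element with support `[a, b+1]` is
`u s_{b+1}` or `s_{b+1} u` for a boolean `u` with support `[a, b]`, according to whether `s_b`
comes before or after `s_{b+1}`; the two families are disjoint, as the corresponding permutations
send `b+1` to `b+2` and below `b+1`, respectively. Hence the count doubles at each step.
-/

namespace Paper
open List

variable {W : Type*} [Group W]

/-- `ω` is a reduced word for `w`. -/
def IsReducedWord {B : Type*} {M : CoxeterMatrix B} (cs : CoxeterSystem M W)
    (w : W) (ω : List B) : Prop :=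
  cs.wordProd ω = w ∧ ω.length = cs.length w

/-- The support of `w`. -/
def Supp {B : Type*} {M : CoxeterMatrix B} (cs : CoxeterSystem M W) (w : W) : Set B :=
  {i | ∃ ω, IsReducedWord cs w ω ∧ i ∈ ω}

/-- `w` is a product of pairwise distinct simple reflections. -/
def IsBoolean {B : Type*} {M : CoxeterMatrix B} (cs : CoxeterSystem M W) (w : W) : Prop :=
  ∃ ω : List B, ω.Nodup ∧ cs.wordProd ω = w

/-- Bruhat order, characterized via the subword property. -/
def BruhatLE {B : Type*} {M : CoxeterMatrix B} (cs : CoxeterSystem M W) (u w : W) : Prop :=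
  ∃ ω ω' : List B, IsReducedWord cs w ω ∧ ω'.Sublist ω ∧ cs.wordProd ω' = u

/-- `s` occurs (strictly) before `t` in the list `ω`. -/
def PrecedesIn {B : Type*} (ω : List B) (s t : B) : Prop :=
  ∃ i j : Fin ω.length, (i : ℕ) < (j : ℕ) ∧ ω.get i = s ∧ ω.get j = t

open Equiv

lemma swap_mul_swap_pow_three {α : Type*} [DecidableEq α] {a b c : α}
    (hab : a ≠ b) (hac : a ≠ c) (hbc : b ≠ c) : (swap a b * swap b c) ^ 3 = 1 := by
  have hXYX : swap a b * swap b c * swap a b = swap a c := by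
    rw [swap_comm a b, swap_comm b c]
    exact swap_mul_swap_mul_swap hbc.symm hac.symm
  have hYXY : swap b c * swap a b * swap b c = swap c a := swap_mul_swap_mul_swap hab hac
  calc (swap a b * swap b c) ^ 3
      = (swap a b * swap b c * swap a b) * (swap b c * swap a b * swap b c) := by
        simp only [pow_succ, pow_zero, one_mul, mul_assoc]
    _ = 1 := by rw [hXYX, hYXY, swap_comm c a, swap_mul_self]

def adjSwap (k : ℕ) : Perm ℕ := swap k (k + 1)

lemma adjSwap_apply_le_iff {a k : ℕ} (h : a ≠ k) (x : ℕ) : adjSwap a x ≤ k ↔ x ≤ k := by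
  simp only [adjSwap, swap_apply_def]
  split_ifs <;> omega

lemma prod_map_adjSwap_apply_le_iff {l : List ℕ} {k : ℕ} (h : k ∉ l) (x : ℕ) :
    (l.map adjSwap).prod x ≤ k ↔ x ≤ k := by
  induction l generalizing x with
  | nil => rfl
  | cons a l ih =>
    rw [mem_cons, not_or] at h
    rw [map_cons, prod_cons, Perm.mul_apply, adjSwap_apply_le_iff (Ne.symm h.1), ih h.2]

def crossings (k : ℕ) (σ : Perm ℕ) : ℕ := ((Finset.Iic k).filter (fun q => k < σ q)).card

lemma crossings_one (k : ℕ) : crossings k 1 = 0 := by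
  refine Finset.card_eq_zero.2 (Finset.filter_eq_empty_iff.2 fun q hq => ?_)
  simpa using Finset.mem_Iic.1 hq

lemma crossings_mul_le (k : ℕ) (σ τ : Perm ℕ) :
    crossings k (σ * τ) ≤ crossings k σ + crossings k τ := by
  unfold crossings
  calc _ ≤ ((Finset.Iic k).filter (fun q => k < τ q) ∪
        ((Finset.Iic k).filter (fun p => k < σ p)).image τ.symm).card := by
        refine Finset.card_le_card ?_
        intro q hq
        rw [Finset.mem_filter, Finset.mem_Iic, Perm.mul_apply] at hq
        simp only [Finset.mem_union, Finset.mem_filter, Finset.mem_Iic, Finset.mem_image]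
        by_cases hτ : k < τ q
        · exact Or.inl ⟨hq.1, hτ⟩
        · exact Or.inr ⟨τ q, ⟨by omega, hq.2⟩, τ.symm_apply_apply q⟩
    _ ≤ _ := by
      rw [add_comm]
      exact (Finset.card_union_le _ _).trans (Nat.add_le_add_left Finset.card_image_le _)

lemma crossings_adjSwap_le (a k : ℕ) : crossings k (adjSwap a) ≤ if a = k then 1 else 0 := by
  split_ifs with h
  · subst h
    refine (Finset.card_le_card ?_).trans (Finset.card_singleton a).le
    intro q hq
    rw [Finset.mem_filter, Finset.mem_Iic, adjSwap, swap_apply_def] at hq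
    rw [Finset.mem_singleton]
    split_ifs at hq <;> omega
  · refine (Finset.card_eq_zero.2 (Finset.filter_eq_empty_iff.2 fun q hq => ?_)).le
    rw [not_lt, adjSwap_apply_le_iff h]
    exact Finset.mem_Iic.1 hq

lemma crossings_prod_map_adjSwap_le (l : List ℕ) (k : ℕ) :
    crossings k (l.map adjSwap).prod ≤ l.count k := by
  induction l with
  | nil => simp [crossings_one]
  | cons a l ih =>
    rw [map_cons, prod_cons, count_cons, add_comm (l.count k)]
    refine (crossings_mul_le k _ _).trans (add_le_add ?_ ih)
    simpa using crossings_adjSwap_le a k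

lemma crossings_prod_map_adjSwap_of_nodup {l : List ℕ} (hl : l.Nodup) (k : ℕ) :
    crossings k (l.map adjSwap).prod = l.count k := by
  refine le_antisymm (crossings_prod_map_adjSwap_le l k) ?_
  rw [hl.count]
  split_ifs with hk
  swap; · exact Nat.zero_le _
  obtain ⟨P, S, rfl⟩ := append_of_mem hk
  have hPS := (nodup_cons.1 (nodup_middle.1 hl)).1
  rw [mem_append, not_or] at hPS
  -- The point that `S` carries to `k` is moved to `k + 1` by `s_k` and kept above `k` by `P`.
  set σS := (S.map adjSwap).prod
  have hq : σS.symm k ≤ k := (prod_map_adjSwap_apply_le_iff hPS.2 _).1 (by simp [σS])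
  refine Finset.card_pos.2 ⟨σS.symm k, Finset.mem_filter.2 ⟨Finset.mem_Iic.2 hq, ?_⟩⟩
  have hP := prod_map_adjSwap_apply_le_iff hPS.1 (k + 1)
  simp only [map_append, map_cons, prod_append, prod_cons, Perm.mul_apply]
  rw [show σS (σS.symm k) = k from σS.apply_symm_apply k, adjSwap, swap_apply_left]
  omega

lemma sum_count_eq_length {α : Type*} [Fintype α] [DecidableEq α] (l : List α) :
    ∑ a, l.count a = l.length := by
  simpa using Multiset.sum_count_eq_card (s := Finset.univ) (m := (l : Multiset α)) (by simp)

section Coxeter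

variable {B : Type*} {M : CoxeterMatrix B} (cs : CoxeterSystem M W)

lemma wordProd_append_cons_of_commute_right {P S : List B} {t : B}
    (h : ∀ l ∈ S, Commute (cs.simple t) (cs.simple l)) :
    cs.wordProd (P ++ t :: S) = cs.wordProd (P ++ S) * cs.simple t := by
  have hS : Commute (cs.simple t) (cs.wordProd S) :=
    Commute.list_prod_right _ _ (by simpa using h)
  rw [cs.wordProd_append, cs.wordProd_cons, cs.wordProd_append, mul_assoc, hS.eq]

lemma wordProd_append_cons_of_commute_left {P S : List B} {t : B}
    (h : ∀ l ∈ P, Commute (cs.simple t) (cs.simple l)) :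
    cs.wordProd (P ++ t :: S) = cs.simple t * cs.wordProd (P ++ S) := by
  have hP : Commute (cs.simple t) (cs.wordProd P) :=
    Commute.list_prod_right _ _ (by simpa using h)
  rw [cs.wordProd_append, cs.wordProd_cons, cs.wordProd_append, ← mul_assoc, ← hP.eq, mul_assoc]

end Coxeter

section TypeA

lemma isLiftable_adjSwap (n : ℕ) :
    (CoxeterMatrix.A n).IsLiftable (fun k : Fin n => adjSwap k) := by
  intro k l
  change (adjSwap k * adjSwap l) ^ (if k = l then 1 else
    if (l : ℕ) + 1 = k ∨ (k : ℕ) + 1 = l then 3 else 2) = 1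
  split_ifs with hkl hadj
  · rw [hkl, pow_one, adjSwap, swap_mul_self]
  · rcases hadj with h | h
    · rw [adjSwap, adjSwap, ← h, Equiv.swap_comm, Equiv.swap_comm (l : ℕ)]
      exact swap_mul_swap_pow_three (by omega) (by omega) (by omega)
    · rw [adjSwap, adjSwap, ← h]
      exact swap_mul_swap_pow_three (by omega) (by omega) (by omega)
  · have hkl' : (k : ℕ) ≠ l := Fin.val_ne_of_ne hkl
    ext x
    simp only [adjSwap, sq, Perm.mul_apply, swap_apply_def, Perm.one_apply]
    split_ifs <;> omega

variable {n : ℕ} (cs : CoxeterSystem (CoxeterMatrix.A n) W)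

def permRep : W →* Perm ℕ := cs.lift ⟨_, isLiftable_adjSwap n⟩

lemma permRep_simple (k : Fin n) : permRep cs (cs.simple k) = adjSwap k :=
  cs.lift_apply_simple _ k

lemma permRep_wordProd (ω : List (Fin n)) :
    permRep cs (cs.wordProd ω) = ((ω.map Fin.val).map adjSwap).prod := by
  rw [CoxeterSystem.wordProd, map_list_prod, map_map, map_map]
  exact congrArg _ (map_congr_left fun k _ => permRep_simple cs k)

lemma count_le_count_of_wordProd_eq {ω η : List (Fin n)} (hω : ω.Nodup)
    (h : cs.wordProd η = cs.wordProd ω) (k : Fin n) : ω.count k ≤ η.count k := by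
  rw [← count_map_of_injective ω _ Fin.val_injective,
    ← count_map_of_injective η _ Fin.val_injective,
    ← crossings_prod_map_adjSwap_of_nodup (hω.map Fin.val_injective), ← permRep_wordProd cs, ← h,
    permRep_wordProd]
  exact crossings_prod_map_adjSwap_le _ _

lemma count_eq_count_of_isReduced {ω η : List (Fin n)} (hω : ω.Nodup) (hη : cs.IsReduced η)
    (h : cs.wordProd η = cs.wordProd ω) (k : Fin n) : η.count k = ω.count k := by
  have hle := count_le_count_of_wordProd_eq cs hω h
  have hsum : ∑ k, ω.count k = ∑ k, η.count k := by
    refine le_antisymm (Finset.sum_le_sum fun k _ => hle k) ?_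
    rw [sum_count_eq_length, sum_count_eq_length, ← hη.eq, h]
    exact cs.length_wordProd_le ω
  exact ((Finset.sum_eq_sum_iff_of_le fun k _ => hle k).1 hsum k (Finset.mem_univ k)).symm

lemma isReduced_of_nodup {ω : List (Fin n)} (hω : ω.Nodup) : cs.IsReduced ω := by
  obtain ⟨η, hη, h⟩ := cs.exists_isReduced (cs.wordProd ω)
  have hcount := count_eq_count_of_isReduced cs hω hη h.symm
  rw [CoxeterSystem.IsReduced, h, hη.eq, ← sum_count_eq_length, ← sum_count_eq_length]
  exact Finset.sum_congr rfl fun k _ => hcount k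

lemma supp_wordProd_of_nodup {ω : List (Fin n)} (hω : ω.Nodup) :
    Supp cs (cs.wordProd ω) = {k | k ∈ ω} := by
  ext k
  constructor
  · rintro ⟨η, ⟨hη, hlen⟩, hk⟩
    have hred : cs.IsReduced η := by rw [CoxeterSystem.IsReduced, hη, hlen]
    rw [Set.mem_ofPred_eq, ← count_pos_iff, ← count_eq_count_of_isReduced cs hω hred hη]
    exact count_pos_iff.2 hk
  · exact fun hk => ⟨ω, ⟨rfl, (isReduced_of_nodup cs hω).eq.symm⟩, hk⟩

def booleansIcc (a b : ℕ) : Set W :=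
  {w | ∃ ω : List (Fin n), ω.Nodup ∧ (∀ k : Fin n, k ∈ ω ↔ a ≤ k ∧ (k : ℕ) ≤ b) ∧
    cs.wordProd ω = w}

lemma setOf_isBoolean_supp_eq_Icc (i j : Fin n) :
    {w : W | IsBoolean cs w ∧ Supp cs w = Set.Icc i j} = booleansIcc cs (i : ℕ) (j : ℕ) := by
  ext w
  constructor
  · rintro ⟨⟨ω, hω, rfl⟩, hsupp⟩
    rw [supp_wordProd_of_nodup cs hω] at hsupp
    refine ⟨ω, hω, fun k => ?_, rfl⟩
    have hk := Set.ext_iff.1 hsupp k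
    rwa [Set.mem_ofPred_eq, Set.mem_Icc, Fin.le_def, Fin.le_def] at hk
  · rintro ⟨ω, hω, hmem, rfl⟩
    refine ⟨⟨ω, hω, rfl⟩, ?_⟩
    ext k
    rw [supp_wordProd_of_nodup cs hω, Set.mem_ofPred_eq, hmem, Set.mem_Icc, Fin.le_def, Fin.le_def]

lemma booleansIcc_self {a : ℕ} (ha : a < n) : booleansIcc cs a a = {cs.simple ⟨a, ha⟩} := by
  ext w
  constructor
  · rintro ⟨ω, hω, hmem, rfl⟩
    have hperm : ω.Perm [⟨a, ha⟩] :=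
      (perm_ext_iff_of_nodup hω (nodup_singleton _)).2 fun k => by
        simp only [hmem, mem_singleton, Fin.ext_iff]
        omega
    rw [perm_singleton.1 hperm, cs.wordProd_singleton, Set.mem_singleton_iff]
  · rintro rfl
    refine ⟨[⟨a, ha⟩], nodup_singleton _, fun k => ?_, cs.wordProd_singleton _⟩
    simp only [mem_singleton, Fin.ext_iff]
    omega

lemma commute_simple_of_add_one_lt {k l : Fin n} (h : (l : ℕ) + 1 < k) :
    Commute (cs.simple k) (cs.simple l) := by
  have hM : CoxeterMatrix.A n k l = 2 := by
    change (if k = l then 1 else if (l : ℕ) + 1 = k ∨ (k : ℕ) + 1 = l then 3 else 2) = 2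
    rw [if_neg (by rintro rfl; omega), if_neg (by omega)]
  have h2 := cs.simple_mul_simple_pow k l
  rw [hM, sq] at h2
  exact (mul_eq_one_iff_eq_inv.1 h2).trans (by simp)

lemma booleansIcc_succ_subset {a b : ℕ} (hab : a ≤ b) (hb : b + 1 < n) :
    booleansIcc cs a (b + 1) ⊆
      (· * cs.simple ⟨b + 1, hb⟩) '' booleansIcc cs a b ∪
        (cs.simple ⟨b + 1, hb⟩ * ·) '' booleansIcc cs a b := by
  set t : Fin n := ⟨b + 1, hb⟩
  have ht : (t : ℕ) = b + 1 := rfl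
  rintro _ ⟨ω, hω, hmem, rfl⟩
  obtain ⟨P, S, rfl⟩ := append_of_mem ((hmem t).2 (by omega))
  obtain ⟨htPS, hPS⟩ := nodup_cons.1 (nodup_middle.1 hω)
  have hmemPS : ∀ k : Fin n, k ∈ P ++ S ↔ a ≤ k ∧ (k : ℕ) ≤ b := fun k => by
    have hk := hmem k
    rw [perm_middle.mem_iff, mem_cons] at hk
    by_cases hkt : k = t
    · subst hkt
      exact iff_of_false htPS (by omega)
    · have hkt' : (k : ℕ) ≠ b + 1 := fun e => hkt (Fin.ext e)
      rw [or_iff_right hkt] at hk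
      rw [hk]
      omega
  have hu : cs.wordProd (P ++ S) ∈ booleansIcc cs a b := ⟨P ++ S, hPS, hmemPS, rfl⟩
  set p : Fin n := ⟨b, by omega⟩
  have hcomm : ∀ l ∈ P ++ S, l ≠ p → Commute (cs.simple t) (cs.simple l) := fun l hl hlp =>
    have hlb : (l : ℕ) ≠ b := fun e => hlp (Fin.ext e)
    commute_simple_of_add_one_lt cs (by have := (hmemPS l).1 hl; omega)
  have hdisj := disjoint_of_nodup_append hPS
  rcases mem_append.1 ((hmemPS p).2 ⟨hab, le_rfl⟩) with hpP | hpS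
  · refine Or.inl ⟨_, hu, (wordProd_append_cons_of_commute_right cs fun l hl => ?_).symm⟩
    exact hcomm l (mem_append_right P hl) fun e => hdisj (e ▸ hpP) hl
  · refine Or.inr ⟨_, hu, (wordProd_append_cons_of_commute_left cs fun l hl => ?_).symm⟩
    exact hcomm l (mem_append_left S hl) fun e => hdisj hl (e ▸ hpS)

lemma image_mul_simple_union_image_simple_mul_subset {a b : ℕ} (hab : a ≤ b) (hb : b + 1 < n) :
    (· * cs.simple ⟨b + 1, hb⟩) '' booleansIcc cs a b ∪
        (cs.simple ⟨b + 1, hb⟩ * ·) '' booleansIcc cs a b ⊆ booleansIcc cs a (b + 1) := by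
  set t : Fin n := ⟨b + 1, hb⟩
  have ht : (t : ℕ) = b + 1 := rfl
  have hext : ∀ u ∈ booleansIcc cs a b, ∃ ω : List (Fin n), ω.Nodup ∧ t ∉ ω ∧
      (∀ k : Fin n, k ∈ ω ∨ k = t ↔ a ≤ k ∧ (k : ℕ) ≤ b + 1) ∧ cs.wordProd ω = u := by
    rintro _ ⟨ω, hω, hmem, rfl⟩
    refine ⟨ω, hω, fun h => by have := (hmem t).1 h; omega, fun k => ?_, rfl⟩
    rw [hmem, Fin.ext_iff]
    omega
  rintro _ (⟨u, hu, rfl⟩ | ⟨u, hu, rfl⟩) <;> obtain ⟨ω, hω, htω, hmem, rfl⟩ := hext u hu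
  · refine ⟨ω ++ [t], ?_, fun k => ?_, by rw [cs.wordProd_append, cs.wordProd_singleton]⟩
    · exact hω.append (nodup_singleton t) (disjoint_singleton.2 htω)
    · rw [mem_append, mem_singleton, hmem]
  · refine ⟨t :: ω, nodup_cons.2 ⟨htω, hω⟩, fun k => ?_, cs.wordProd_cons _ _⟩
    rw [mem_cons, or_comm, hmem]

lemma booleansIcc_succ {a b : ℕ} (hab : a ≤ b) (hb : b + 1 < n) :
    booleansIcc cs a (b + 1) =
      (· * cs.simple ⟨b + 1, hb⟩) '' booleansIcc cs a b ∪
        (cs.simple ⟨b + 1, hb⟩ * ·) '' booleansIcc cs a b :=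
  (booleansIcc_succ_subset cs hab hb).antisymm
    (image_mul_simple_union_image_simple_mul_subset cs hab hb)

lemma permRep_apply_of_mem_booleansIcc {a b : ℕ} (hab : a ≤ b) (hb : b < n) {u : W}
    (hu : u ∈ booleansIcc cs a b) : permRep cs u (b + 1) ≤ b ∧ permRep cs u (b + 2) = b + 2 := by
  obtain ⟨ω, hω, hmem, rfl⟩ := hu
  have hl : (ω.map Fin.val).Nodup := hω.map Fin.val_injective
  rw [permRep_wordProd]
  set σ := ((ω.map Fin.val).map adjSwap).prod
  have hσ : ∀ k, b < k → ∀ x, σ x ≤ k ↔ x ≤ k := fun k hk =>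
    prod_map_adjSwap_apply_le_iff fun hkω => by
      obtain ⟨i, hi, rfl⟩ := mem_map.1 hkω
      have := (hmem i).1 hi
      omega
  have hcross : 0 < crossings b σ := by
    rw [crossings_prod_map_adjSwap_of_nodup hl, count_pos_iff]
    exact mem_map.2 ⟨⟨b, hb⟩, (hmem _).2 ⟨hab, le_rfl⟩, rfl⟩
  obtain ⟨q, hq⟩ := Finset.card_pos.1 hcross
  rw [Finset.mem_filter, Finset.mem_Iic] at hq
  have hinj : σ (b + 1) ≠ σ q := fun e => by have := σ.injective e; omega
  have := hσ (b + 1) (by omega) q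
  have := hσ (b + 1) (by omega) (b + 1)
  have := hσ (b + 1) (by omega) (b + 2)
  have := hσ (b + 2) (by omega) (b + 2)
  omega

lemma disjoint_image_mul_simple_image_simple_mul {a b : ℕ} (hab : a ≤ b) (hb : b + 1 < n) :
    Disjoint ((· * cs.simple ⟨b + 1, hb⟩) '' booleansIcc cs a b)
      ((cs.simple ⟨b + 1, hb⟩ * ·) '' booleansIcc cs a b) := by
  rw [Set.disjoint_left]
  rintro _ ⟨u, hu, rfl⟩ ⟨v, hv, huv⟩
  have hperm := congrArg (fun w => permRep cs w (b + 1)) huv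
  simp only [map_mul, Perm.mul_apply, permRep_simple] at hperm
  obtain ⟨-, hu⟩ := permRep_apply_of_mem_booleansIcc cs hab (by omega) hu
  obtain ⟨hv, -⟩ := permRep_apply_of_mem_booleansIcc cs hab (by omega) hv
  rw [adjSwap, swap_apply_left, hu, swap_apply_of_ne_of_ne (by omega) (by omega)] at hperm
  omega

lemma encard_booleansIcc {a : ℕ} (m : ℕ) (h : a + m < n) :
    (booleansIcc cs a (a + m)).encard = 2 ^ m := by
  induction m with
  | zero => rw [add_zero, booleansIcc_self cs (by omega : a < n), Set.encard_singleton, pow_zero]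
  | succ m ih =>
    have h' : a + m + 1 < n := by omega
    rw [← add_assoc, booleansIcc_succ cs (Nat.le_add_right a m) h',
      Set.encard_union_eq (disjoint_image_mul_simple_image_simple_mul cs (Nat.le_add_right a m) h'),
      (mul_left_injective _).encard_image, (mul_right_injective _).encard_image, ih (by omega),
      pow_succ, mul_two]

end TypeA

/-- In type `Aₙ` (the symmetric group `S_{n+1}`), the number of boolean elements whose
support is exactly the interval `{α_i, ..., α_j}` (with `i ≤ j`) is `2^(j-i)`. -/
theorem stmt17 (n : ℕ) (cs : CoxeterSystem (CoxeterMatrix.Aₙ n) W)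
    (i j : Fin n) (hij : i ≤ j) :
    Set.ncard {w : W | IsBoolean cs w ∧ Supp cs w = Set.Icc i j} = 2 ^ ((j : ℕ) - (i : ℕ)) := by
  obtain ⟨m, hm⟩ : ∃ m, (j : ℕ) = i + m := ⟨j - i, by rw [Fin.le_def] at hij; omega⟩
  refine (congrArg Set.ncard (setOf_isBoolean_supp_eq_Icc cs i j)).trans ?_
  rw [Set.ncard_def, hm, encard_booleansIcc cs m (by have := j.isLt; omega),
    Nat.add_sub_cancel_left]
  simp

end Paper
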